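/- For every λ > 0, η ∈ ℝ^h, and η₀ ∈ ℝ, the set { θ ∈ [−π,π] : 2λS_w(θ) + η·A(θ) + η₀ = 0 and η·B(θ) = 0 } is finite, where A(θ) = (cos θ, …, cos hθ) and B(θ) = (sin θ, …, sin hθ). Equivalently, the function r²(θ) = (2λS_w(θ) + η·A(θ) + η₀)² + (η·B(θ))² vanishes at only finitely many θ ∈ [−π,π]. -/

import Mathlib

open MeasureTheory Real Filter

noncomputable section

def muI : Measure ℝ := volume.restrict (Set.Icc (-π) π)

def L2I (f : ℝ → ℝ) : Prop := MemLp f 2 muI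

def causalZero (a b : ℝ → ℝ) (n : ℕ) : Prop :=
  (∫ θ in (-π)..π, a θ * Real.cos ((n : ℝ) * θ))
    + (∫ θ in (-π)..π, b θ * Real.sin ((n : ℝ) * θ)) = 0

def powerAB (Sw a b : ℝ → ℝ) : ℝ :=
  (1 / (2 * π)) * ∫ θ in (-π)..π, ((a θ) ^ 2 + (b θ) ^ 2) * Sw θ

def rateAB (a b : ℝ → ℝ) : ℝ :=
  (1 / (4 * π)) * ∫ θ in (-π)..π, Real.log ((1 + a θ) ^ 2 + (b θ) ^ 2)

/-- Feedback capacity: causality constraints for all `n ≥ 0`. -/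
def Cfb (Sw : ℝ → ℝ) (P : ℝ) : ℝ :=
  sSup {R | ∃ a b : ℝ → ℝ, L2I a ∧ L2I b ∧ powerAB Sw a b ≤ P ∧
    (∀ n : ℕ, causalZero a b n) ∧ R = rateAB a b}

/-- `C_fb(h)`: causality constraints only for `0 ≤ n ≤ h`. -/
def CfbH (Sw : ℝ → ℝ) (P : ℝ) (h : ℕ) : ℝ :=
  sSup {R | ∃ a b : ℝ → ℝ, L2I a ∧ L2I b ∧ powerAB Sw a b ≤ P ∧
    (∀ n : ℕ, n ≤ h → causalZero a b n) ∧ R = rateAB a b}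

def dotA (h : ℕ) (η : Fin h → ℝ) (θ : ℝ) : ℝ :=
  ∑ k : Fin h, η k * Real.cos (((k.1 + 1 : ℕ) : ℝ) * θ)

def dotB (h : ℕ) (η : Fin h → ℝ) (θ : ℝ) : ℝ :=
  ∑ k : Fin h, η k * Real.sin (((k.1 + 1 : ℕ) : ℝ) * θ)

/-- `r²(θ)`. -/
def rsq (Sw : ℝ → ℝ) {h : ℕ} (lam : ℝ) (η : Fin h → ℝ) (η0 θ : ℝ) : ℝ :=
  (2 * lam * Sw θ + dotA h η θ + η0) ^ 2 + (dotB h η θ) ^ 2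

/-- `ν(θ) = (−r² + √(r⁴ + 8λS_w r²))/2`. -/
def nuf (Sw : ℝ → ℝ) {h : ℕ} (lam : ℝ) (η : Fin h → ℝ) (η0 θ : ℝ) : ℝ :=
  (-(rsq Sw lam η η0 θ)
    + Real.sqrt ((rsq Sw lam η η0 θ) ^ 2 + 8 * lam * Sw θ * rsq Sw lam η η0 θ)) / 2

/-- The dual function `g(λ,η,η₀)`.  (In Lean, `x / 0 = 0`, which implements the
convention `r²/(2ν) = 0` when `ν = 0`.) -/
def gdual (Sw : ℝ → ℝ) (P : ℝ) {h : ℕ} (lam : ℝ) (η : Fin h → ℝ) (η0 : ℝ) : ℝ :=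
  (1 / (2 * π)) * (∫ θ in (-π)..π,
      ((1 / 2) * Real.log (2 * lam * Sw θ - nuf Sw lam η η0 θ)
        - rsq Sw lam η η0 θ / (2 * nuf Sw lam η η0 θ) + lam * Sw θ))
    - lam * P + η0 + 1 / 2

/-! Both sets are contained in the zero set of `r²`, which is real-analytic in `θ` because
`S_w(θ) = |p(e^{iθ})|² / |q(e^{iθ})|²` with `q` zero-free on the unit circle. If `r²` had
infinitely many zeros in the compact interval `[−π, π]`, it would vanish identically. Then
`η·B ≡ 0`, which forces `η = 0` by orthogonality of the sines on `[−π, π]`, and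
`2λS_w + η₀ ≡ 0` would make `S_w` constant. -/

open Complex in
lemma analyticAt_cexp_ofReal_mul_I (x : ℝ) :
    AnalyticAt ℝ (fun θ : ℝ => exp (θ * I)) x :=
  analyticAt_cexp.restrictScalars.comp
    ((ofRealCLM.analyticAt x).mul analyticAt_const)

lemma AnalyticAt.sq_norm_complex {E : Type*} [NormedAddCommGroup E] [NormedSpace ℝ E]
    {f : E → ℂ} {x : E} (hf : AnalyticAt ℝ f x) :
    AnalyticAt ℝ (fun t => ‖f t‖ ^ 2) x := by
  have hre : AnalyticAt ℝ (fun t => (f t).re) x := (Complex.reCLM.analyticAt _).comp hf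
  have him : AnalyticAt ℝ (fun t => (f t).im) x := (Complex.imCLM.analyticAt _).comp hf
  have hsq : (fun t => ‖f t‖ ^ 2) = fun t => (f t).re ^ 2 + (f t).im ^ 2 := by
    funext t
    rw [Complex.sq_norm, Complex.normSq_apply]
    ring
  rw [hsq]
  fun_prop

open Complex in
lemma analyticAt_sq_norm_eval_div_eval_exp_mul_I (P Q : Polynomial ℂ) {x : ℝ}
    (hQ : Q.eval (exp (x * I)) ≠ 0) :
    AnalyticAt ℝ (fun θ : ℝ => ‖P.eval (exp (θ * I)) / Q.eval (exp (θ * I))‖ ^ 2) x := by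
  have heval (R : Polynomial ℂ) : AnalyticAt ℝ (fun θ : ℝ => R.eval (exp (θ * I))) x :=
    (AnalyticOnNhd.eval_polynomial R _ (Set.mem_univ _)).comp (analyticAt_cexp_ofReal_mul_I x)
  exact ((heval P).div (heval Q) hQ).sq_norm_complex

theorem AnalyticOnNhd.finite_sep_eq_zero_of_isCompact {𝕜 E : Type*}
    [NontriviallyNormedField 𝕜] [NormedAddCommGroup E] [NormedSpace 𝕜 E] {f : 𝕜 → E} {U K : Set 𝕜}
    (hf : AnalyticOnNhd 𝕜 f U) (hU : IsPreconnected U) (hKU : K ⊆ U) (hK : IsCompact K)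
    (hf₀ : ¬ Set.EqOn f 0 U) : {x ∈ K | f x = 0}.Finite := by
  have hne : ∀ᶠ x in codiscreteWithin K, f x ≠ 0 :=
    ((hf.eqOn_zero_or_eventually_ne_zero_of_preconnected hU).resolve_left hf₀).filter_mono
      (codiscreteWithin_mono hKU)
  convert hK.finite_sdiff_of_mem_codiscreteWithin hne using 1
  ext x
  simp

lemma integral_cos_int_mul_eq_zero {k : ℤ} (hk : k ≠ 0) :
    ∫ θ in (-π)..π, cos (k * θ) = 0 := by
  rw [intervalIntegral.integral_comp_mul_left (fun θ => cos θ) (Int.cast_ne_zero.mpr hk),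
    integral_cos]
  simp [mul_neg, sin_neg, sin_int_mul_pi]

lemma integral_sin_nat_mul_mul_sin_nat_mul {a b : ℕ} (ha : a ≠ 0) :
    ∫ θ in (-π)..π, sin (a * θ) * sin (b * θ) = if a = b then π else 0 := by
  have hprod (θ : ℝ) : sin (a * θ) * sin (b * θ)
      = (cos (((a - b : ℤ) : ℝ) * θ) - cos (((a + b : ℤ) : ℝ) * θ)) / 2 := by
    push_cast
    rw [sub_mul, add_mul, cos_sub, cos_add]
    ring
  have hsum : ∫ θ in (-π)..π, cos (((a + b : ℤ) : ℝ) * θ) = 0 :=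
    integral_cos_int_mul_eq_zero (by omega)
  simp_rw [hprod]
  rw [intervalIntegral.integral_div, intervalIntegral.integral_sub
    (Continuous.intervalIntegrable (by fun_prop) _ _)
    (Continuous.intervalIntegrable (by fun_prop) _ _), hsum]
  split_ifs with hab
  · simp [hab]
  · rw [integral_cos_int_mul_eq_zero (by omega)]
    simp

lemma integral_dotB_mul_sin {h : ℕ} (η : Fin h → ℝ) (m : Fin h) :
    ∫ θ in (-π)..π, dotB h η θ * sin (((m.1 + 1 : ℕ) : ℝ) * θ) = π * η m := by
  simp_rw [dotB, Finset.sum_mul, mul_assoc]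
  rw [intervalIntegral.integral_finsetSum fun k _ =>
    Continuous.intervalIntegrable (by fun_prop) _ _]
  simp_rw [intervalIntegral.integral_const_mul,
    integral_sin_nat_mul_mul_sin_nat_mul (Nat.succ_ne_zero _), Nat.succ_inj, Fin.val_inj,
    mul_ite, mul_zero, Finset.sum_ite_eq', Finset.mem_univ, if_true, mul_comm]

lemma eq_zero_of_forall_dotB_eq_zero {h : ℕ} {η : Fin h → ℝ} (hB : ∀ θ, dotB h η θ = 0) :
    η = 0 := by
  funext m
  have hint := integral_dotB_mul_sin η m
  simp only [hB, zero_mul, intervalIntegral.integral_zero] at hint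
  exact (mul_eq_zero.mp hint.symm).resolve_left pi_ne_zero

lemma Sw_eq_of_forall_rsq_eq_zero {Sw : ℝ → ℝ} {h : ℕ} {lam : ℝ} {η : Fin h → ℝ} {η0 : ℝ}
    (hlam : lam ≠ 0) (hr : ∀ θ, rsq Sw lam η η0 θ = 0) (θ : ℝ) :
    Sw θ = -η0 / (2 * lam) := by
  have hsplit (t : ℝ) : 2 * lam * Sw t + dotA h η t + η0 = 0 ∧ dotB h η t = 0 := by
    obtain ⟨hF, hB⟩ :=
      (add_eq_zero_iff_of_nonneg (sq_nonneg _) (sq_nonneg _)).mp (hr t)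
    exact ⟨pow_eq_zero_iff two_ne_zero |>.mp hF, pow_eq_zero_iff two_ne_zero |>.mp hB⟩
  have hη := eq_zero_of_forall_dotB_eq_zero fun t => (hsplit t).2
  have hA : dotA h η θ = 0 := by simp [dotA, hη]
  have hF := (hsplit θ).1
  rw [hA, add_zero] at hF
  field_simp
  linarith

lemma analyticOnNhd_rsq {Sw : ℝ → ℝ} (hSw : AnalyticOnNhd ℝ Sw Set.univ) {h : ℕ} (lam : ℝ)
    (η : Fin h → ℝ) (η0 : ℝ) : AnalyticOnNhd ℝ (rsq Sw lam η η0) Set.univ := by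
  intro x hx
  have := hSw x hx
  unfold rsq dotA dotB
  fun_prop

theorem rsq_zero_set_finite_general
    (p q : Polynomial ℝ)
    (hq : ∀ z : ℂ, (q.map (algebraMap ℝ ℂ)).eval z = 0 → ‖z‖ < 1)
    (Sw : ℝ → ℝ)
    (hSw : ∀ θ : ℝ, Sw θ =
      (‖((p.map (algebraMap ℝ ℂ)).eval (Complex.exp ((θ : ℂ) * Complex.I)) /
        (q.map (algebraMap ℝ ℂ)).eval (Complex.exp ((θ : ℂ) * Complex.I)))‖) ^ 2)
    (hSwnc : ¬ ∃ cst : ℝ, ∀ θ ∈ Set.Icc (-π) π, Sw θ = cst)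
    (h : ℕ) (lam : ℝ) (hlam : 0 < lam) (η : Fin h → ℝ) (η0 : ℝ) :
    Set.Finite {θ ∈ Set.Icc (-π) π |
        2 * lam * Sw θ + dotA h η θ + η0 = 0 ∧ dotB h η θ = 0} ∧
    Set.Finite {θ ∈ Set.Icc (-π) π | rsq Sw lam η η0 θ = 0} := by
  have hSwA : AnalyticOnNhd ℝ Sw Set.univ := by
    rw [funext hSw]
    refine fun θ _ => analyticAt_sq_norm_eval_div_eval_exp_mul_I _ _ fun h0 => ?_
    simpa [Complex.norm_exp_ofReal_mul_I] using hq _ h0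
  have hr : ¬ Set.EqOn (rsq Sw lam η η0) 0 Set.univ := fun hzero => hSwnc
    ⟨-η0 / (2 * lam), fun θ _ => Sw_eq_of_forall_rsq_eq_zero hlam.ne' (fun t => hzero trivial) θ⟩
  have hfin : {θ ∈ Set.Icc (-π) π | rsq Sw lam η η0 θ = 0}.Finite :=
    (analyticOnNhd_rsq hSwA lam η η0).finite_sep_eq_zero_of_isCompact
      isPreconnected_univ (Set.subset_univ _) isCompact_Icc hr
  refine ⟨hfin.subset ?_, hfin⟩
  rintro θ ⟨hθ, hF, hB⟩
  exact ⟨hθ, by simp [rsq, hF, hB]⟩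

/-- for every `λ > 0`, `η ∈ ℝ^h`, `η₀ ∈ ℝ`, the set of
`θ ∈ [−π,π]` where `2λS_w(θ) + η·A(θ) + η₀ = 0` and `η·B(θ) = 0` is finite;
equivalently `r²(θ)` has only finitely many zeros in `[−π,π]`. -/
theorem rsq_zero_set_finite
    (p q : Polynomial ℝ)
    (hq : ∀ z : ℂ, (q.map (algebraMap ℝ ℂ)).eval z = 0 → ‖z‖ < 1)
    (hp : ∀ z : ℂ, ‖z‖ = 1 → (p.map (algebraMap ℝ ℂ)).eval z ≠ 0)
    (Sw : ℝ → ℝ)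
    (hSw : ∀ θ : ℝ, Sw θ =
      (‖((p.map (algebraMap ℝ ℂ)).eval (Complex.exp ((θ : ℂ) * Complex.I)) /
        (q.map (algebraMap ℝ ℂ)).eval (Complex.exp ((θ : ℂ) * Complex.I)))‖) ^ 2)
    (hSwnc : ¬ ∃ cst : ℝ, ∀ θ ∈ Set.Icc (-π) π, Sw θ = cst)
    (h : ℕ) (lam : ℝ) (hlam : 0 < lam) (η : Fin h → ℝ) (η0 : ℝ) :
    Set.Finite {θ ∈ Set.Icc (-π) π |
        2 * lam * Sw θ + dotA h η θ + η0 = 0 ∧ dotB h η θ = 0} ∧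
    Set.Finite {θ ∈ Set.Icc (-π) π | rsq Sw lam η η0 θ = 0} :=
  rsq_zero_set_finite_general p q hq Sw hSw hSwnc h lam hlam η η0
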